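/- Fix an odd natural number d and phases φ₁, …, φ_d ∈ ℝ. Then there exists a polynomial P ∈ ℂ[x], depending only on d and the phases, with deg P ≤ d, P(−x) = −P(x), and |P(x)| ≤ 1 for all x ∈ [−1,1], such that the following holds: for every N ≥ 1, every pair of N×N unitary complex matrices W and V, and every σ : Fin N → ℝ with 0 ≤ σ_k ≤ 1 for all k, setting A := W · diag(σ) · V†, S := W · diag(√(1−σ_k²)) · V†, U to be the 2N×2N block matrix [[A, S], [S, −A]], and Π_φ := [[e^{iφ}·I_N, 0], [0, e^{−iφ}·I_N]], the top-left N×N block of Π_{φ₁} · U · ∏_{k=1}^{(d−1)/2} ( Π_{φ_{2k}} · U† · Π_{φ_{2k+1}} · U ) equals W · diag(P(σ_k)) · V†. -/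

import Mathlib

open Matrix Polynomial

/-- The block unitary completion `[[A, S], [S, -A]]` of a block-encoded operator. -/
noncomputable def blockU {N : ℕ} (A S : Matrix (Fin N) (Fin N) ℂ) :
    Matrix (Fin N ⊕ Fin N) (Fin N ⊕ Fin N) ℂ :=
  Matrix.fromBlocks A S S (-A)

/-- The projector-controlled phase shift `Π_φ = [[e^{iφ}I, 0], [0, e^{-iφ}I]]`. -/
noncomputable def blockPi (N : ℕ) (φ : ℝ) :
    Matrix (Fin N ⊕ Fin N) (Fin N ⊕ Fin N) ℂ :=
  Matrix.fromBlocks (Complex.exp (Complex.I * φ) • 1) 0 0 (Complex.exp (-(Complex.I * φ)) • 1)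


def QRep (n : ℕ) (M : ℝ → Matrix (Fin 2) (Fin 2) ℂ) : Prop :=
  ∃ P Q R T : Polynomial ℂ,
    P.degree ≤ (n : ℕ) ∧ Q.degree + 1 ≤ (n : ℕ) ∧ R.degree + 1 ≤ (n : ℕ) ∧ T.degree ≤ (n : ℕ) ∧
    P.comp (-X) = (-1) ^ n * P ∧ Q.comp (-X) = (-1) ^ (n+1) * Q ∧
    R.comp (-X) = (-1) ^ (n+1) * R ∧ T.comp (-X) = (-1) ^ n * T ∧
    ∀ x : ℝ, -1 ≤ x → x ≤ 1 →
      M x = !![P.eval (x : ℂ), ((Real.sqrt (1 - x ^ 2) : ℝ) : ℂ) * Q.eval (x:ℂ);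
               ((Real.sqrt (1 - x ^ 2) : ℝ) : ℂ) * R.eval (x:ℂ), T.eval (x:ℂ)]

lemma deg_one_sub_X_sq : (1 - X ^ 2 : ℂ[X]).degree ≤ 2 :=
  (degree_sub_le _ _).trans (by simp [degree_one_le])

lemma rep_mul {n n' : ℕ} {M M' : ℝ → Matrix (Fin 2) (Fin 2) ℂ}
    (h : QRep n M) (h' : QRep n' M') : QRep (n + n') (fun x => M x * M' x) := by
  obtain ⟨P, Q, R, T, dP, dQ, dR, dT, pP, pQ, pR, pT, hev⟩ := h
  obtain ⟨P', Q', R', T', dP', dQ', dR', dT', pP', pQ', pR', pT', hev'⟩ := h'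
  have key : ∀ a b : ℂ[X], ∀ m m' : ℕ, a.degree + 1 ≤ m → b.degree + 1 ≤ m' →
      ((1 - X ^ 2) * (a * b)).degree ≤ ((m + m' : ℕ) : WithBot ℕ) := by
    intro a b m m' ha hb
    refine (degree_mul_le _ _).trans ?_
    calc (1 - X ^ 2 : ℂ[X]).degree + (a * b).degree
        ≤ 2 + (a.degree + b.degree) := add_le_add deg_one_sub_X_sq (degree_mul_le _ _)
      _ = (a.degree + 1) + (b.degree + 1) := by push_cast; ring
      _ ≤ (m : WithBot ℕ) + (m' : WithBot ℕ) := add_le_add ha hb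
      _ = ((m + m' : ℕ) : WithBot ℕ) := by push_cast; ring
  have key2 : ∀ a b : ℂ[X], ∀ m m' : ℕ, a.degree ≤ m → b.degree + 1 ≤ m' →
      (a * b).degree + 1 ≤ ((m + m' : ℕ) : WithBot ℕ) := by
    intro a b m m' ha hb
    calc (a * b).degree + 1 ≤ a.degree + (b.degree + 1) := by
          rw [← add_assoc]; exact add_le_add (degree_mul_le _ _) le_rfl
      _ ≤ (m : WithBot ℕ) + (m' : WithBot ℕ) := add_le_add ha hb
      _ = ((m + m' : ℕ) : WithBot ℕ) := by push_cast; ring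
  have key2' : ∀ a b : ℂ[X], ∀ m m' : ℕ, a.degree + 1 ≤ m → b.degree ≤ m' →
      (a * b).degree + 1 ≤ ((m + m' : ℕ) : WithBot ℕ) := by
    intro a b m m' ha hb
    have := key2 b a m' m hb ha
    rwa [mul_comm, Nat.add_comm m'] at this
  refine ⟨P * P' + (1 - X ^ 2) * (Q * R'), P * Q' + Q * T', R * P' + T * R',
    (1 - X ^ 2) * (R * Q') + T * T', ?_, ?_, ?_, ?_, ?_, ?_, ?_, ?_, ?_⟩
  · refine (degree_add_le _ _).trans (max_le ((degree_mul_le _ _).trans ?_) (key _ _ _ _ dQ dR'))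
    exact_mod_cast add_le_add dP dP'
  · calc (P * Q' + Q * T').degree + 1 ≤ max ((P*Q').degree) ((Q*T').degree) + 1 :=
          add_le_add (degree_add_le _ _) le_rfl
      _ = max ((P*Q').degree + 1) ((Q*T').degree + 1) := (max_add_add_right _ _ _).symm
      _ ≤ ((n + n' : ℕ) : WithBot ℕ) := max_le (key2 _ _ _ _ dP dQ') (key2' _ _ _ _ dQ dT')
  · calc (R * P' + T * R').degree + 1 ≤ max ((R*P').degree) ((T*R').degree) + 1 :=
          add_le_add (degree_add_le _ _) le_rfl
      _ = max ((R*P').degree + 1) ((T*R').degree + 1) := (max_add_add_right _ _ _).symm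
      _ ≤ ((n + n' : ℕ) : WithBot ℕ) := max_le (key2' _ _ _ _ dR dP') (key2 _ _ _ _ dT dR')
  · refine (degree_add_le _ _).trans (max_le (key _ _ _ _ dR dQ') ((degree_mul_le _ _).trans ?_))
    exact_mod_cast add_le_add dT dT'
  · have h2 : ((1 : ℂ[X]) - X ^ 2).comp (-X) = 1 - X ^ 2 := by
      simp [sub_comp, pow_comp, neg_comp, X_comp]
    simp only [add_comp, mul_comp, h2, pP, pP', pQ, pR']
    simp only [pow_succ, pow_add]
    ring
  · simp only [add_comp, mul_comp, pP, pQ, pT', pQ', pow_succ, pow_add]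
    ring
  · simp only [add_comp, mul_comp, pR, pP', pT, pR', pow_succ, pow_add]
    ring
  · have h2 : ((1 : ℂ[X]) - X ^ 2).comp (-X) = 1 - X ^ 2 := by
      simp [sub_comp, pow_comp, neg_comp, X_comp]
    simp only [add_comp, mul_comp, h2, pR, pQ', pT, pT']
    simp only [pow_succ, pow_add]
    ring
  · intro x hx1 hx2
    have h0 : (0:ℝ) ≤ 1 - x ^ 2 := by nlinarith
    have hs : ((Real.sqrt (1 - x^2) : ℝ) : ℂ) ^ 2
        = 1 - (x:ℂ)^2 := by
      rw [← Complex.ofReal_pow, Real.sq_sqrt h0]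
      push_cast; ring
    simp only [hev x hx1 hx2, hev' x hx1 hx2]
    ext i j
    fin_cases i <;> fin_cases j
    · simp [Matrix.mul_apply, Fin.sum_univ_two]
      linear_combination (eval (x:ℂ) Q * eval (x:ℂ) R') * hs
    · simp [Matrix.mul_apply, Fin.sum_univ_two]
      ring
    · simp [Matrix.mul_apply, Fin.sum_univ_two]
      ring
    · simp [Matrix.mul_apply, Fin.sum_univ_two]
      linear_combination (eval (x:ℂ) R * eval (x:ℂ) Q') * hs

noncomputable def uMat (x : ℝ) : Matrix (Fin 2) (Fin 2) ℂ :=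
  !![(x : ℂ), ((Real.sqrt (1 - x ^ 2) : ℝ) : ℂ); ((Real.sqrt (1 - x ^ 2) : ℝ) : ℂ), -(x : ℂ)]

noncomputable def piMat (φ : ℝ) : Matrix (Fin 2) (Fin 2) ℂ :=
  !![Complex.exp (Complex.I * φ), 0; 0, Complex.exp (-(Complex.I * φ))]

noncomputable def qspProd (φ : ℕ → ℝ) (m : ℕ) (x : ℝ) : Matrix (Fin 2) (Fin 2) ℂ :=
  piMat (φ 1) * uMat x *
    ((List.range m).map (fun k => piMat (φ (2*k+2)) * uMat x * piMat (φ (2*k+3)) * uMat x)).prod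

lemma rep_congr {n : ℕ} {M M' : ℝ → Matrix (Fin 2) (Fin 2) ℂ} (h : QRep n M)
    (he : ∀ x : ℝ, -1 ≤ x → x ≤ 1 → M x = M' x) : QRep n M' := by
  obtain ⟨P, Q, R, T, dP, dQ, dR, dT, pP, pQ, pR, pT, hev⟩ := h
  exact ⟨P, Q, R, T, dP, dQ, dR, dT, pP, pQ, pR, pT,
    fun x h1 h2 => (he x h1 h2) ▸ hev x h1 h2⟩

lemma rep_pi (φ : ℝ) : QRep 0 (fun _ => piMat φ) := by
  refine ⟨C (Complex.exp (Complex.I * φ)), 0, 0, C (Complex.exp (-(Complex.I * φ))),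
    degree_C_le, by simp, by simp, degree_C_le, by simp, by simp, by simp, by simp, ?_⟩
  intro x _ _
  simp [piMat]

lemma rep_u : QRep 1 (fun x => uMat x) := by
  refine ⟨X, 1, 1, -X, degree_X_le, ?_, ?_, by simpa using degree_X_le,
    by simp, by simp, by simp, by simp [neg_comp], ?_⟩
  · simpa using add_le_add_right degree_one_le 1
  · simpa using add_le_add_right degree_one_le 1
  · intro x _ _
    simp [uMat]

lemma rep_qspProd (φ : ℕ → ℝ) (m : ℕ) : QRep (2 * m + 1) (qspProd φ m) := by
  induction m with
  | zero =>
      refine rep_congr (rep_mul (rep_pi (φ 1)) rep_u) ?_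
      intro x _ _
      simp [qspProd]
  | succ m ih =>
      have hextra : QRep 2 (fun x => piMat (φ (2*m+2)) * uMat x * piMat (φ (2*m+3)) * uMat x) :=
        rep_mul (rep_mul (rep_mul (rep_pi _) rep_u) (rep_pi _)) rep_u
      have : QRep (2 * m + 1 + 2)
          (fun x => qspProd φ m x * (piMat (φ (2*m+2)) * uMat x * piMat (φ (2*m+3)) * uMat x)) :=
        rep_mul ih hextra
      rw [show 2 * (m + 1) + 1 = 2 * m + 1 + 2 from by ring]
      refine rep_congr this ?_
      intro x _ _
      simp only [qspProd, List.range_succ, List.map_append, List.prod_append,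
        List.map_cons, List.map_nil, List.prod_cons, List.prod_nil, mul_one]
      rw [mul_assoc]

lemma uMat_mem {x : ℝ} (h1 : -1 ≤ x) (h2 : x ≤ 1) : uMat x ∈ Matrix.unitaryGroup (Fin 2) ℂ := by
  have h0 : (0:ℝ) ≤ 1 - x ^ 2 := by nlinarith
  have hs : ((Real.sqrt (1 - x^2) : ℝ) : ℂ) ^ 2 = 1 - (x:ℂ)^2 := by
    rw [← Complex.ofReal_pow, Real.sq_sqrt h0]; push_cast; ring
  rw [Matrix.mem_unitaryGroup_iff]
  ext i j
  fin_cases i <;> fin_cases j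
  all_goals simp [uMat, Matrix.mul_apply, Fin.sum_univ_two, Matrix.one_apply,
      Matrix.conjTranspose_apply, Complex.star_def, Complex.conj_ofReal]
  all_goals first
      | linear_combination hs
      | ring1

lemma piMat_mem (φ : ℝ) : piMat φ ∈ Matrix.unitaryGroup (Fin 2) ℂ := by
  rw [Matrix.mem_unitaryGroup_iff]
  have he : Complex.exp (Complex.I * φ) * Complex.exp (-(Complex.I * φ)) = 1 := by
    rw [← Complex.exp_add]; simp
  have hc : (starRingEnd ℂ) (Complex.exp (Complex.I * φ)) = Complex.exp (-(Complex.I * φ)) := by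
    rw [← Complex.exp_conj]; congr 1; simp [Complex.conj_ofReal]
  have hc' : (starRingEnd ℂ) (Complex.exp (-(Complex.I * φ))) = Complex.exp (Complex.I * φ) := by
    rw [← Complex.exp_conj]; congr 1; simp [Complex.conj_ofReal]
  have he' : Complex.exp (-(Complex.I * φ)) * Complex.exp (Complex.I * φ) = 1 := by
    rw [mul_comm]; exact he
  ext i j
  fin_cases i <;> fin_cases j <;>
    simp [piMat, Matrix.mul_apply, Fin.sum_univ_two, Matrix.one_apply,
      Matrix.conjTranspose_apply, hc, hc', he, he']

lemma qspProd_mem (φ : ℕ → ℝ) (m : ℕ) {x : ℝ} (h1 : -1 ≤ x) (h2 : x ≤ 1) :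
    qspProd φ m x ∈ Matrix.unitaryGroup (Fin 2) ℂ := by
  refine Submonoid.mul_mem _ (Submonoid.mul_mem _ (piMat_mem _) (uMat_mem h1 h2)) ?_
  refine Submonoid.list_prod_mem _ ?_
  intro a ha
  simp only [List.mem_map] at ha
  obtain ⟨k, -, rfl⟩ := ha
  exact Submonoid.mul_mem _ (Submonoid.mul_mem _ (Submonoid.mul_mem _ (piMat_mem _)
    (uMat_mem h1 h2)) (piMat_mem _)) (uMat_mem h1 h2)

lemma entry_le_one {U : Matrix (Fin 2) (Fin 2) ℂ} (hU : U ∈ Matrix.unitaryGroup (Fin 2) ℂ)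
    (i j : Fin 2) : ‖U i j‖ ≤ 1 := by
  have h := Matrix.mem_unitaryGroup_iff.mp hU
  have hrow := congrFun (congrFun h i) i
  simp only [Matrix.mul_apply, Fin.sum_univ_two, Matrix.one_apply_eq, Matrix.star_apply,
    Matrix.conjTranspose_apply] at hrow
  have hrow' : ‖U i 0‖^2 + ‖U i 1‖^2 = 1 := by
    have := congrArg Complex.re hrow
    simpa [Complex.mul_conj, ← Complex.normSq_eq_norm_sq] using this
  have h1 : ‖U i j‖^2 ≤ 1 := by
    fin_cases j <;> simp only [Fin.zero_eta, Fin.mk_one] <;>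
      nlinarith [norm_nonneg (U i 0), norm_nonneg (U i 1),
        sq_nonneg ‖U i 0‖, sq_nonneg ‖U i 1‖]
  nlinarith [norm_nonneg (U i j)]

noncomputable def twoDiag {N : ℕ} (f : Fin N → Matrix (Fin 2) (Fin 2) ℂ) :
    Matrix (Fin N ⊕ Fin N) (Fin N ⊕ Fin N) ℂ :=
  Matrix.fromBlocks (Matrix.diagonal fun k => f k 0 0) (Matrix.diagonal fun k => f k 0 1)
    (Matrix.diagonal fun k => f k 1 0) (Matrix.diagonal fun k => f k 1 1)

lemma twoDiag_mul {N : ℕ} (f g : Fin N → Matrix (Fin 2) (Fin 2) ℂ) :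
    twoDiag f * twoDiag g = twoDiag (fun k => f k * g k) := by
  simp only [twoDiag, Matrix.fromBlocks_multiply, Matrix.diagonal_mul_diagonal,
    Matrix.diagonal_add]
  congr 1 <;> try congr 1
  all_goals
    funext k
    simp [Matrix.mul_apply, Fin.sum_univ_two]

lemma twoDiag_one {N : ℕ} : twoDiag (fun _ : Fin N => (1 : Matrix (Fin 2) (Fin 2) ℂ)) = 1 := by
  have h0 : ((1 : Matrix (Fin 2) (Fin 2) ℂ) 0 1) = 0 := by simp [Matrix.one_apply]
  have h1 : ((1 : Matrix (Fin 2) (Fin 2) ℂ) 1 0) = 0 := by simp [Matrix.one_apply]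
  simp [twoDiag, h0, h1, Matrix.diagonal_one, ← Matrix.fromBlocks_one]

lemma twoDiag_prod {N : ℕ} {α : Type*} (l : List α) (g : α → Fin N → Matrix (Fin 2) (Fin 2) ℂ) :
    (l.map (fun a => twoDiag (g a))).prod = twoDiag (fun k => (l.map (fun a => g a k)).prod) := by
  induction l with
  | nil => simp [twoDiag_one]
  | cons a l ih => simp [ih, twoDiag_mul]

/-- the diag-block-embedding of a single matrix -/
noncomputable def dbl {N : ℕ} (M : Matrix (Fin N) (Fin N) ℂ) :
    Matrix (Fin N ⊕ Fin N) (Fin N ⊕ Fin N) ℂ :=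
  Matrix.fromBlocks M 0 0 M

lemma dbl_mul {N : ℕ} (M M' : Matrix (Fin N) (Fin N) ℂ) : dbl M * dbl M' = dbl (M * M') := by
  simp [dbl, Matrix.fromBlocks_multiply]

lemma dbl_conjTranspose {N : ℕ} (M : Matrix (Fin N) (Fin N) ℂ) : (dbl M)ᴴ = dbl Mᴴ := by
  simp [dbl, Matrix.fromBlocks_conjTranspose]

lemma dbl_one {N : ℕ} : dbl (1 : Matrix (Fin N) (Fin N) ℂ) = 1 := by
  simp [dbl, Matrix.fromBlocks_one]

lemma blockPi_eq_twoDiag {N : ℕ} (φ : ℝ) : blockPi N φ = twoDiag (fun _ : Fin N => piMat φ) := by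
  have hd : ∀ c : ℂ, Matrix.diagonal (fun _ : Fin N => c) = c • (1 : Matrix (Fin N) (Fin N) ℂ) := by
    intro c
    ext i j
    by_cases h : i = j <;> simp [Matrix.diagonal_apply, Matrix.one_apply, h]
  simp [blockPi, twoDiag, piMat, hd]

lemma blockPi_comm_dbl {N : ℕ} (φ : ℝ) (M : Matrix (Fin N) (Fin N) ℂ) :
    blockPi N φ * dbl M = dbl M * blockPi N φ := by
  simp [blockPi, dbl, Matrix.fromBlocks_multiply, Matrix.smul_mul, Matrix.mul_smul]

lemma conj_prod {N : ℕ} {α : Type*} (B : Matrix (Fin N ⊕ Fin N) (Fin N ⊕ Fin N) ℂ)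
    (Binv : Matrix (Fin N ⊕ Fin N) (Fin N ⊕ Fin N) ℂ) (h1 : B * Binv = 1) (h2 : Binv * B = 1)
    (l : List α) (g : α → Matrix (Fin N ⊕ Fin N) (Fin N ⊕ Fin N) ℂ) :
    (l.map (fun a => B * g a * Binv)).prod = B * (l.map g).prod * Binv := by
  induction l with
  | nil => simp [h1]
  | cons a l ih =>
      simp only [List.map_cons, List.prod_cons, ih]
      calc B * g a * Binv * (B * (l.map g).prod * Binv)
          = B * g a * (Binv * B) * (l.map g).prod * Binv := by
            simp only [Matrix.mul_assoc]
        _ = B * (g a * (l.map g).prod) * Binv := by simp [h2, Matrix.mul_assoc]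

lemma uMat_twoDiag {N : ℕ} (σ : Fin N → ℝ) :
    twoDiag (fun k => uMat (σ k)) =
      Matrix.fromBlocks (Matrix.diagonal fun k => ((σ k : ℝ) : ℂ))
        (Matrix.diagonal fun k => ((Real.sqrt (1 - σ k ^ 2) : ℝ) : ℂ))
        (Matrix.diagonal fun k => ((Real.sqrt (1 - σ k ^ 2) : ℝ) : ℂ))
        (-(Matrix.diagonal fun k => ((σ k : ℝ) : ℂ))) := by
  simp only [twoDiag, uMat]
  congr 1 <;> try congr 1
  all_goals simp [Matrix.diagonal_neg]

lemma blockU_eq {N : ℕ} (W V : Matrix (Fin N) (Fin N) ℂ) (σ : Fin N → ℝ) :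
    blockU (W * Matrix.diagonal (fun k => ((σ k : ℝ) : ℂ)) * Vᴴ)
        (W * Matrix.diagonal (fun k => ((Real.sqrt (1 - σ k ^ 2) : ℝ) : ℂ)) * Vᴴ)
      = dbl W * twoDiag (fun k => uMat (σ k)) * (dbl V)ᴴ := by
  rw [uMat_twoDiag, dbl_conjTranspose]
  simp only [blockU, dbl, Matrix.fromBlocks_conjTranspose, Matrix.fromBlocks_multiply]
  have hneg : (Matrix.diagonal fun i : Fin N => -((σ i : ℝ) : ℂ))
      = -(Matrix.diagonal fun i : Fin N => ((σ i : ℝ) : ℂ)) := (Matrix.diagonal_neg _).symm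
  simp [Matrix.mul_neg, Matrix.neg_mul]
  rw [hneg, Matrix.mul_neg, Matrix.neg_mul]

lemma matrix_side {N : ℕ} (φ : ℕ → ℝ) (m : ℕ) (W V : Matrix (Fin N) (Fin N) ℂ)
    (hW : W ∈ Matrix.unitaryGroup (Fin N) ℂ) (hV : V ∈ Matrix.unitaryGroup (Fin N) ℂ)
    (σ : Fin N → ℝ) :
    blockPi N (φ 1) *
      blockU (W * Matrix.diagonal (fun k => ((σ k : ℝ) : ℂ)) * Vᴴ)
        (W * Matrix.diagonal (fun k => ((Real.sqrt (1 - σ k ^ 2) : ℝ) : ℂ)) * Vᴴ) *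
      ((List.range m).map (fun k =>
        blockPi N (φ (2 * k + 2)) *
        (blockU (W * Matrix.diagonal (fun k => ((σ k : ℝ) : ℂ)) * Vᴴ)
          (W * Matrix.diagonal (fun k => ((Real.sqrt (1 - σ k ^ 2) : ℝ) : ℂ)) * Vᴴ))ᴴ *
        blockPi N (φ (2 * k + 3)) *
        blockU (W * Matrix.diagonal (fun k => ((σ k : ℝ) : ℂ)) * Vᴴ)
          (W * Matrix.diagonal (fun k => ((Real.sqrt (1 - σ k ^ 2) : ℝ) : ℂ)) * Vᴴ))).prod
      = dbl W * twoDiag (fun k => qspProd φ m (σ k)) * (dbl V)ᴴ := by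
  have hWW : Wᴴ * W = 1 := by
    simpa [Matrix.star_eq_conjTranspose] using Matrix.mem_unitaryGroup_iff'.mp hW
  have hVV : Vᴴ * V = 1 := by
    simpa [Matrix.star_eq_conjTranspose] using Matrix.mem_unitaryGroup_iff'.mp hV
  have hVV' : V * Vᴴ = 1 := by
    simpa [Matrix.star_eq_conjTranspose] using Matrix.mem_unitaryGroup_iff.mp hV
  set u2 := twoDiag (fun k => uMat (σ k)) with hu2def
  have hU := blockU_eq W V σ
  have hs1 : star (fun k : Fin N => ((σ k : ℝ) : ℂ)) = fun k : Fin N => ((σ k : ℝ) : ℂ) := by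
    funext k; simp [Pi.star_apply, Complex.star_def, Complex.conj_ofReal]
  have hs2 : star (fun k : Fin N => ((Real.sqrt (1 - σ k ^ 2) : ℝ) : ℂ))
      = fun k : Fin N => ((Real.sqrt (1 - σ k ^ 2) : ℝ) : ℂ) := by
    funext k; simp [Pi.star_apply, Complex.star_def, Complex.conj_ofReal]
  have hu2H : u2ᴴ = u2 := by
    rw [hu2def, uMat_twoDiag]
    simp [Matrix.fromBlocks_conjTranspose, Matrix.conjTranspose_neg,
      Matrix.diagonal_conjTranspose, hs1, hs2]
  have hUH : (blockU (W * Matrix.diagonal (fun k => ((σ k : ℝ) : ℂ)) * Vᴴ)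
      (W * Matrix.diagonal (fun k => ((Real.sqrt (1 - σ k ^ 2) : ℝ) : ℂ)) * Vᴴ))ᴴ
      = dbl V * u2 * (dbl W)ᴴ := by
    rw [hU]
    simp only [Matrix.conjTranspose_mul, Matrix.conjTranspose_conjTranspose, hu2H]
    simp [Matrix.mul_assoc]
    rw [← hu2def, hu2H]
  -- commuting helpers
  have cW : ∀ (ψ : ℝ) (X : Matrix (Fin N ⊕ Fin N) (Fin N ⊕ Fin N) ℂ),
      blockPi N ψ * (dbl W * X) = dbl W * (blockPi N ψ * X) := by
    intro ψ X
    rw [← Matrix.mul_assoc, blockPi_comm_dbl, Matrix.mul_assoc]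
  have cV : ∀ (ψ : ℝ) (X : Matrix (Fin N ⊕ Fin N) (Fin N ⊕ Fin N) ℂ),
      blockPi N ψ * (dbl V * X) = dbl V * (blockPi N ψ * X) := by
    intro ψ X
    rw [← Matrix.mul_assoc, blockPi_comm_dbl, Matrix.mul_assoc]
  have cWH : ∀ (ψ : ℝ) (X : Matrix (Fin N ⊕ Fin N) (Fin N ⊕ Fin N) ℂ),
      blockPi N ψ * ((dbl W)ᴴ * X) = (dbl W)ᴴ * (blockPi N ψ * X) := by
    intro ψ X
    rw [dbl_conjTranspose, ← Matrix.mul_assoc, blockPi_comm_dbl, Matrix.mul_assoc]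
  have hWid : ∀ X : Matrix (Fin N ⊕ Fin N) (Fin N ⊕ Fin N) ℂ, (dbl W)ᴴ * (dbl W * X) = X := by
    intro X
    rw [← Matrix.mul_assoc, dbl_conjTranspose, dbl_mul, hWW, dbl_one, Matrix.one_mul]
  -- rewrite each list element
  have helem : ∀ k : ℕ,
      blockPi N (φ (2 * k + 2)) *
        (blockU (W * Matrix.diagonal (fun k => ((σ k : ℝ) : ℂ)) * Vᴴ)
          (W * Matrix.diagonal (fun k => ((Real.sqrt (1 - σ k ^ 2) : ℝ) : ℂ)) * Vᴴ))ᴴ *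
        blockPi N (φ (2 * k + 3)) *
        blockU (W * Matrix.diagonal (fun k => ((σ k : ℝ) : ℂ)) * Vᴴ)
          (W * Matrix.diagonal (fun k => ((Real.sqrt (1 - σ k ^ 2) : ℝ) : ℂ)) * Vᴴ)
      = dbl V * (blockPi N (φ (2 * k + 2)) * u2 * blockPi N (φ (2 * k + 3)) * u2) * (dbl V)ᴴ := by
    intro k
    rw [hUH, hU]
    simp only [Matrix.mul_assoc]
    rw [cV, cW (φ (2 * k + 3)), hWid]
  have hVid : ∀ X : Matrix (Fin N ⊕ Fin N) (Fin N ⊕ Fin N) ℂ, (dbl V)ᴴ * (dbl V * X) = X := by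
    intro X
    rw [← Matrix.mul_assoc, dbl_conjTranspose, dbl_mul, hVV, dbl_one, Matrix.one_mul]
  have hV1 : dbl V * (dbl V)ᴴ = 1 := by
    rw [dbl_conjTranspose, dbl_mul, hVV', dbl_one]
  have hV2 : (dbl V)ᴴ * dbl V = 1 := by
    rw [dbl_conjTranspose, dbl_mul, hVV, dbl_one]
  have tm : ∀ (f g : Fin N → Matrix (Fin 2) (Fin 2) ℂ)
      (X : Matrix (Fin N ⊕ Fin N) (Fin N ⊕ Fin N) ℂ),
      twoDiag f * (twoDiag g * X) = twoDiag (fun k => f k * g k) * X := by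
    intro f g X
    rw [← Matrix.mul_assoc, twoDiag_mul]
  have hG : ((List.range m).map (fun k =>
        blockPi N (φ (2*k+2)) * u2 * blockPi N (φ (2*k+3)) * u2)).prod
      = twoDiag (fun j => ((List.range m).map (fun k =>
          piMat (φ (2*k+2)) * uMat (σ j) * piMat (φ (2*k+3)) * uMat (σ j))).prod) := by
    rw [show (fun k => blockPi N (φ (2*k+2)) * u2 * blockPi N (φ (2*k+3)) * u2)
        = fun k => twoDiag (fun j =>
            piMat (φ (2*k+2)) * uMat (σ j) * piMat (φ (2*k+3)) * uMat (σ j)) from ?_]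
    · exact twoDiag_prod _ _
    · funext k
      rw [hu2def, blockPi_eq_twoDiag, blockPi_eq_twoDiag, twoDiag_mul, twoDiag_mul, twoDiag_mul]
  simp only [helem]
  rw [conj_prod _ _ hV1 hV2, hG, hU]
  set G := twoDiag (fun j => ((List.range m).map (fun k =>
      piMat (φ (2*k+2)) * uMat (σ j) * piMat (φ (2*k+3)) * uMat (σ j))).prod) with hGdef
  simp only [Matrix.mul_assoc]
  rw [cW (φ 1), hVid, blockPi_eq_twoDiag, tm, hGdef, tm]
  simp only [qspProd]

lemma toBlocks11_dbl {N : ℕ} (W V : Matrix (Fin N) (Fin N) ℂ)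
    (h : Fin N → Matrix (Fin 2) (Fin 2) ℂ) :
    (dbl W * twoDiag h * (dbl V)ᴴ).toBlocks₁₁
      = W * Matrix.diagonal (fun k => h k 0 0) * Vᴴ := by
  simp [dbl, twoDiag, Matrix.fromBlocks_conjTranspose, Matrix.fromBlocks_multiply,
    Matrix.toBlocks_fromBlocks₁₁]


/-- Quantum Singular Value Transformation (Theorem 4, odd degree): the top-left block of the
odd QSVT sequence built on the unitary completion of `A = W diag(σ) V†` is the singular value
transform `W diag(P(σ_k)) V†` of `A` by `P`. -/
theorem singular_value_transform_odd (d : ℕ) (hd : Odd d) (φ : ℕ → ℝ) :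
    ∃ P : Polynomial ℂ,
      P.degree ≤ (d : ℕ) ∧
      P.comp (-X) = -P ∧
      (∀ x : ℝ, x ∈ Set.Icc (-1 : ℝ) 1 → ‖P.eval (x : ℂ)‖ ≤ 1) ∧
      ∀ N : ℕ, 1 ≤ N → ∀ W V : Matrix (Fin N) (Fin N) ℂ,
        W ∈ Matrix.unitaryGroup (Fin N) ℂ → V ∈ Matrix.unitaryGroup (Fin N) ℂ →
        ∀ σ : Fin N → ℝ, (∀ k, 0 ≤ σ k ∧ σ k ≤ 1) →
          Matrix.toBlocks₁₁
            (blockPi N (φ 1) *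
              blockU (W * Matrix.diagonal (fun k => ((σ k : ℝ) : ℂ)) * Vᴴ)
                (W * Matrix.diagonal (fun k => ((Real.sqrt (1 - σ k ^ 2) : ℝ) : ℂ)) * Vᴴ) *
              ((List.range ((d - 1) / 2)).map (fun k =>
                blockPi N (φ (2 * k + 2)) *
                (blockU (W * Matrix.diagonal (fun k => ((σ k : ℝ) : ℂ)) * Vᴴ)
                  (W * Matrix.diagonal (fun k => ((Real.sqrt (1 - σ k ^ 2) : ℝ) : ℂ)) * Vᴴ))ᴴ *
                blockPi N (φ (2 * k + 3)) *
                blockU (W * Matrix.diagonal (fun k => ((σ k : ℝ) : ℂ)) * Vᴴ)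
                  (W * Matrix.diagonal (fun k => ((Real.sqrt (1 - σ k ^ 2) : ℝ) : ℂ)) * Vᴴ))).prod)
            = W * Matrix.diagonal (fun k => P.eval ((σ k : ℝ) : ℂ)) * Vᴴ := by
  
  have hdm : 2 * ((d - 1) / 2) + 1 = d := by
    obtain ⟨t, ht⟩ := hd; omega
  have hrep := rep_qspProd φ ((d - 1) / 2)
  rw [hdm] at hrep
  obtain ⟨P, Q, R, T, dP, dQ, dR, dT, pP, pQ, pR, pT, hev⟩ := hrep
  have h00 : ∀ x : ℝ, -1 ≤ x → x ≤ 1 → (qspProd φ ((d - 1) / 2) x) 0 0 = P.eval (x : ℂ) := by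
    intro x h1 h2
    rw [hev x h1 h2]
    simp
  refine ⟨P, dP, ?_, ?_, ?_⟩
  · rw [pP, hd.neg_one_pow]
    ring
  · intro x hx
    rw [← h00 x hx.1 hx.2]
    exact entry_le_one (qspProd_mem φ _ hx.1 hx.2) 0 0
  · intro N _ W V hW hV σ hσ
    rw [matrix_side φ ((d - 1) / 2) W V hW hV σ, toBlocks11_dbl]
    congr 1
    congr 1
    exact congrArg Matrix.diagonal
      (funext fun k => h00 (σ k) (by linarith [(hσ k).1]) (hσ k).2)
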